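/- Let n be a positive integer, let d ∈ ℝⁿ, and let A be the real n × n matrix with A_{ij} = d_i if i = j and A_{ij} = 1 if i ≠ j. If y ∈ ℝⁿ satisfies A·y = 0, y ≥ 0 (componentwise), and eᵀy = 1, then for every j one has d_j < 1 and y_j = 1/(1 − d_j); in particular, such a solution is unique. -/

import Mathlib

theorem Matrix.mulVec_apply_of_diag_offDiag_one {ι R : Type*} [Fintype ι] [DecidableEq ι]
    [CommRing R] {d : ι → R} {A : Matrix ι ι R} (hA : ∀ i j, A i j = if i = j then d i else 1)
    (y : ι → R) (j : ι) : A.mulVec y j = (d j - 1) * y j + ∑ i, y i := by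
  have hterm : ∀ i, A j i * y i = (if j = i then (d j - 1) * y i else 0) + y i := by
    intro i
    rw [hA]
    split_ifs with h
    · subst h; ring
    · ring
  simp only [Matrix.mulVec, dotProduct, hterm, Finset.sum_add_distrib, Finset.sum_ite_eq,
    Finset.mem_univ, if_true]

theorem lt_one_and_eq_one_div_one_sub {K : Type*} [Field K] [LinearOrder K]
    [IsStrictOrderedRing K] {d y : K} (hy : 0 ≤ y) (h : y * (1 - d) = 1) :
    d < 1 ∧ y = 1 / (1 - d) :=
  ⟨sub_pos.mp (pos_of_mul_pos_right (h.symm ▸ one_pos) hy), eq_one_div_of_mul_eq_one_left h⟩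

theorem unique_solution_special_matrix_general (n : ℕ) (d : Fin n → ℝ)
    (A : Matrix (Fin n) (Fin n) ℝ)
    (hA : ∀ i j, A i j = if i = j then d i else 1)
    (y : Fin n → ℝ) (hker : A.mulVec y = 0) (hnn : ∀ i, 0 ≤ y i)
    (hsum : ∑ i, y i = 1) :
    ∀ j, d j < 1 ∧ y j = 1 / (1 - d j) := by
  intro j
  have hrow : (d j - 1) * y j + ∑ i, y i = 0 := by
    rw [← Matrix.mulVec_apply_of_diag_offDiag_one hA, hker, Pi.zero_apply]
  exact lt_one_and_eq_one_div_one_sub (hnn j) (by linarith)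

/-- Uniqueness: any solution `y` of `Ay = 0, y ≥ 0, eᵀy = 1` for the matrix `A` with
diagonal `d` and off-diagonal entries `1` must satisfy `d j < 1` and
`y j = 1/(1 − d j)` for every `j`. -/
theorem unique_solution_special_matrix (n : ℕ) (hn : 0 < n) (d : Fin n → ℝ)
    (A : Matrix (Fin n) (Fin n) ℝ)
    (hA : ∀ i j, A i j = if i = j then d i else 1)
    (y : Fin n → ℝ) (hker : A.mulVec y = 0) (hnn : ∀ i, 0 ≤ y i)
    (hsum : ∑ i, y i = 1) :
    ∀ j, d j < 1 ∧ y j = 1 / (1 - d j) :=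
  unique_solution_special_matrix_general n d A hA y hker hnn hsum
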